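/- arXiv:2003.06972 — 2 statements merged into one kernel-verified Lean document; each statement's English description precedes it below -/
import Mathlib

section
/- Let n ∈ ℝ³ be a unit vector with P = I − n nᵀ, and let F be a triangle face with unit normal n_F such that |n·n_F| ≥ c > 0. Let t₁, t₂, t₃ be unit vectors spanning the edge directions of F (i.e., any two of them are linearly independent and all lie in the plane orthogonal to n_F). Then there is a constant c' > 0 depending only on c and the angles between the tᵢ such that for every z ∈ ℝ³: ∑_{i=1}^{3} |tᵢ · (P z)|² ≥ c' · ‖P z‖₂². -/
/-!
Two independent edge directions of `F` span `nFᗮ`, so a vector orthogonal to every `t i` is a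
multiple of `nF`; since `⟪n, nF⟫ ≠ 0`, the only such multiple in `nᗮ` is `0`. Hence
`w ↦ (⟪t i, w⟫)ᵢ` is injective on `nᗮ`, and an injective linear map on a finite-dimensional space
is antilipschitz, which yields `c'`. Finally `z - ⟪n, z⟫ • n ∈ nᗮ` because `‖n‖ = 1`.
-/

open scoped RealInnerProductSpace

open Module Submodule

variable {E : Type*} [NormedAddCommGroup E] [InnerProductSpace ℝ E]

theorem exists_pos_mul_sq_norm_le_sum_sq_inner {ι : Type*} [Fintype ι] (K : Submodule ℝ E)
    [FiniteDimensional ℝ K] (t : ι → E) (hK : ∀ w ∈ K, (∀ i, ⟪t i, w⟫ = 0) → w = 0) :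
    ∃ c > 0, ∀ w ∈ K, c * ‖w‖ ^ 2 ≤ ∑ i, ⟪t i, w⟫ ^ 2 := by
  let f : K →ₗ[ℝ] EuclideanSpace ℝ ι := (WithLp.linearEquiv 2 ℝ (ι → ℝ)).symm.toLinearMap ∘ₗ
    LinearMap.pi fun i ↦ innerₛₗ ℝ (t i) ∘ₗ K.subtype
  have hf : ∀ w : K, ‖f w‖ ^ 2 = ∑ i, ⟪t i, w⟫ ^ 2 := fun w ↦ by
    simp [f, EuclideanSpace.norm_sq_eq]
  have hker : LinearMap.ker f = ⊥ := by
    refine LinearMap.ker_eq_bot'.2 fun w hw ↦ Subtype.ext (hK w w.2 fun i ↦ ?_)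
    simpa [f] using congr($hw i)
  obtain ⟨C, hC, hCf⟩ := f.exists_antilipschitzWith hker
  refine ⟨(C ^ 2 : ℝ)⁻¹, by positivity, fun w hw ↦ ?_⟩
  have hbound : ‖w‖ ≤ C * ‖f ⟨w, hw⟩‖ := ZeroHomClass.bound_of_antilipschitz f hCf ⟨w, hw⟩
  rw [← hf ⟨w, hw⟩, inv_mul_le_iff₀ (by positivity), ← mul_pow]
  gcongr

theorem mem_span_singleton_of_forall_inner_eq_zero {ι : Type*} [Fintype ι] {v : ι → E}
    (hv : LinearIndependent ℝ v) (hdim : finrank ℝ E = Fintype.card ι + 1) {x : E} (hx : x ≠ 0)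
    (hvx : ∀ i, ⟪v i, x⟫ = 0) {w : E} (hvw : ∀ i, ⟪v i, w⟫ = 0) : w ∈ ℝ ∙ x := by
  have : FiniteDimensional ℝ E := Module.finite_of_finrank_pos (by omega)
  have hspan : span ℝ (Set.range v) = (ℝ ∙ x)ᗮ := by
    refine eq_of_le_of_finrank_eq (span_le.2 ?_) ?_
    · rintro _ ⟨i, rfl⟩
      exact mem_orthogonal_singleton_iff_inner_right.2 (real_inner_comm x _ ▸ hvx i)
    · have := (ℝ ∙ x).finrank_add_finrank_orthogonal
      rw [finrank_span_singleton hx] at this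
      rw [finrank_span_eq_card hv]
      omega
  have hortho : ℝ ∙ w ⟂ span ℝ (Set.range v) := by
    rw [isOrtho_span]
    rintro _ rfl _ ⟨i, rfl⟩
    rw [real_inner_comm]
    exact hvw i
  have := hortho.le (mem_span_singleton_self w)
  rwa [hspan, orthogonal_orthogonal] at this

theorem stmt_3_general (n nF : EuclideanSpace ℝ (Fin 3)) (hn : ‖n‖ = 1)
    (c : ℝ) (hc : 0 < c) (hangle : c ≤ |⟪n, nF⟫|)
    (t : Fin 3 → EuclideanSpace ℝ (Fin 3))
    (htF : ∀ i, ⟪t i, nF⟫ = 0)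
    (hind : ∀ i j, i ≠ j → LinearIndependent ℝ ![t i, t j]) :
    ∃ c' > 0, ∀ z : EuclideanSpace ℝ (Fin 3),
      ∑ i : Fin 3, ⟪t i, z - ⟪n, z⟫ • n⟫ ^ 2 ≥ c' * ‖z - ⟪n, z⟫ • n‖ ^ 2 := by
  have hnnF : ⟪n, nF⟫ ≠ 0 := fun h ↦ by simp [h] at hangle; linarith
  have hnF : nF ≠ 0 := by rintro rfl; simp at hnnF
  obtain ⟨c', hc', hbound⟩ := exists_pos_mul_sq_norm_le_sum_sq_inner (ℝ ∙ n)ᗮ t fun w hw htw ↦ by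
    have hvw : ∀ i, ⟪![t 0, t 1] i, w⟫ = 0 := Fin.forall_fin_two.2 ⟨htw 0, htw 1⟩
    obtain ⟨a, rfl⟩ := mem_span_singleton.1 <| mem_span_singleton_of_forall_inner_eq_zero
      (hind 0 1 (by decide)) (by simp) hnF (Fin.forall_fin_two.2 ⟨htF 0, htF 1⟩) hvw
    rw [mem_orthogonal_singleton_iff_inner_right, real_inner_smul_right] at hw
    simp [(mul_eq_zero.1 hw).resolve_right hnnF]
  refine ⟨c', hc', fun z ↦ hbound _ ?_⟩
  rw [mem_orthogonal_singleton_iff_inner_right, inner_sub_right, real_inner_smul_right,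
    real_inner_self_eq_norm_sq, hn]
  ring

theorem stmt_3 (n nF : EuclideanSpace ℝ (Fin 3)) (hn : ‖n‖ = 1) (hnF : ‖nF‖ = 1)
    (c : ℝ) (hc : 0 < c) (hangle : c ≤ |⟪n, nF⟫|)
    (t : Fin 3 → EuclideanSpace ℝ (Fin 3)) (ht : ∀ i, ‖t i‖ = 1)
    (htF : ∀ i, ⟪t i, nF⟫ = 0)
    (hind : ∀ i j, i ≠ j → LinearIndependent ℝ ![t i, t j]) :
    ∃ c' > 0, ∀ z : EuclideanSpace ℝ (Fin 3),
      ∑ i : Fin 3, ⟪t i, z - ⟪n, z⟫ • n⟫ ^ 2 ≥ c' * ‖z - ⟪n, z⟫ • n‖ ^ 2 :=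
  stmt_3_general n nF hn c hc hangle t htF hind
end

section
/- Let B : ℝ³ → ℝ³ be a linear map of the form B = P(I − dH)P_h, where P = I − n nᵀ and P_h = I − m mᵀ are orthogonal projections for unit vectors n, m with n·m > 1/2, H is a symmetric matrix with H n = 0, and d ∈ ℝ with |d|·‖H‖₂ < 1/2. Then B restricted to range(P_h) is an isomorphism onto range(P): there exists B⁻¹ : range(P) → range(P_h) with B B⁻¹ = P and B⁻¹ B = P_h. -/
open scoped RealInnerProductSpace
open ContinuousLinearMap

/-- The orthogonal projection `I - n nᵀ` onto the plane orthogonal to `n`. -/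
noncomputable def orthProj (n : EuclideanSpace ℝ (Fin 3)) :
    EuclideanSpace ℝ (Fin 3) →L[ℝ] EuclideanSpace ℝ (Fin 3) :=
  ContinuousLinearMap.id ℝ _ - (innerSL ℝ n).smulRight n

/-! With `P`, `Q` the orthogonal projections onto `n^⊥`, `m^⊥` and `T = I - dH`, the smallness of
`d H` makes `T` invertible by a Neumann series, and `H n = 0` gives `T n = n`. The inverse of
`P T Q` is `R T⁻¹ P`, where `R` is the projection onto `m^⊥` along `n`, which exists because
`⟪n, m⟫ ≠ 0`: as `P` and `R` both kill `n`, which `T` and `T⁻¹` fix, we get `P T R = P T` and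
`R T⁻¹ P = R T⁻¹`, and the rest is `Q R = R`, `R Q = Q`. -/

local notation "𝔼" => EuclideanSpace ℝ (Fin 3)

lemma orthProj_apply (n x : 𝔼) : orthProj n x = x - ⟪n, x⟫ • n := by
  simp [orthProj]

lemma orthProj_apply_of_inner_eq_zero {n x : 𝔼} (h : ⟪n, x⟫ = 0) : orthProj n x = x := by
  simp [orthProj_apply, h]

section UnitNormal

variable {n : 𝔼} (hn : ‖n‖ = 1)
include hn

lemma inner_orthProj_apply (x : 𝔼) : ⟪n, orthProj n x⟫ = 0 := by
  rw [orthProj_apply, inner_sub_right, real_inner_smul_right, real_inner_self_eq_norm_sq, hn]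
  ring

lemma orthProj_apply_self : orthProj n n = 0 := by
  rw [orthProj_apply, real_inner_self_eq_norm_sq, hn]
  simp

lemma orthProj_mul_self : orthProj n * orthProj n = orthProj n :=
  ext fun x => orthProj_apply_of_inner_eq_zero (inner_orthProj_apply hn x)

end UnitNormal

/-- The projection onto `m^⊥` along `ℝ n`. -/
noncomputable def obliqueProj (m n : 𝔼) : 𝔼 →L[ℝ] 𝔼 :=
  ContinuousLinearMap.id ℝ _ - ⟪m, n⟫⁻¹ • (innerSL ℝ m).smulRight n

lemma obliqueProj_apply (m n x : 𝔼) : obliqueProj m n x = x - (⟪m, x⟫ / ⟪m, n⟫) • n := by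
  simp [obliqueProj, smul_smul, div_eq_inv_mul]

section Oblique

variable {m n : 𝔼} (hmn : ⟪m, n⟫ ≠ 0)
include hmn

lemma inner_obliqueProj_apply (x : 𝔼) : ⟪m, obliqueProj m n x⟫ = 0 := by
  rw [obliqueProj_apply, inner_sub_right, real_inner_smul_right, div_mul_cancel₀ _ hmn, sub_self]

lemma obliqueProj_apply_self : obliqueProj m n n = 0 := by
  rw [obliqueProj_apply, div_self hmn, one_smul, sub_self]

lemma orthProj_mul_obliqueProj : orthProj m * obliqueProj m n = obliqueProj m n :=
  ext fun x => orthProj_apply_of_inner_eq_zero (inner_obliqueProj_apply hmn x)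

lemma obliqueProj_mul_mul_orthProj {S : 𝔼 →L[ℝ] 𝔼} (hS : S n = n) :
    obliqueProj m n * S * orthProj n = obliqueProj m n * S := by
  refine ext fun x => ?_
  simp only [mul_apply_eq_comp, orthProj_apply, map_sub, map_smul, hS, obliqueProj_apply_self hmn,
    smul_zero, sub_zero]

end Oblique

lemma obliqueProj_mul_orthProj {m : 𝔼} (hm : ‖m‖ = 1) (n : 𝔼) :
    obliqueProj m n * orthProj m = orthProj m := by
  refine ext fun x => ?_
  simp [obliqueProj_apply, inner_orthProj_apply hm]

lemma orthProj_mul_mul_obliqueProj {n : 𝔼} (hn : ‖n‖ = 1) (m : 𝔼) {S : 𝔼 →L[ℝ] 𝔼}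
    (hS : S n = n) : orthProj n * S * obliqueProj m n = orthProj n * S := by
  refine ext fun x => ?_
  simp only [mul_apply_eq_comp, obliqueProj_apply, map_sub, map_smul, hS, orthProj_apply_self hn,
    smul_zero, sub_zero]

theorem exists_inverse_orthProj_mul_mul_orthProj {n m : 𝔼} (hn : ‖n‖ = 1) (hm : ‖m‖ = 1)
    (hmn : ⟪m, n⟫ ≠ 0) (T : (𝔼 →L[ℝ] 𝔼)ˣ) (hT : (T : 𝔼 →L[ℝ] 𝔼) n = n) :
    ∃ Binv : 𝔼 →L[ℝ] 𝔼,
      Binv = orthProj m * Binv * orthProj n ∧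
      orthProj n * T * orthProj m * Binv = orthProj n ∧
      Binv * (orthProj n * T * orthProj m) = orthProj m := by
  set P := orthProj n
  set Q := orthProj m
  set R := obliqueProj m n
  have hTinv : (↑T⁻¹ : 𝔼 →L[ℝ] 𝔼) n = n := by
    conv_lhs => rw [← hT]
    rw [← mul_apply_eq_comp, T.inv_mul, one_apply_eq_self]
  have hPP : P * P = P := orthProj_mul_self hn
  refine ⟨R * ↑T⁻¹ * P, ?_, ?_, ?_⟩
  · calc R * ↑T⁻¹ * P
        = Q * R * ↑T⁻¹ * (P * P) := by rw [orthProj_mul_obliqueProj hmn, hPP]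
      _ = Q * (R * ↑T⁻¹ * P) * P := by simp only [mul_assoc]
  · calc P * T * Q * (R * ↑T⁻¹ * P)
        = P * T * (Q * R) * ↑T⁻¹ * P := by simp only [mul_assoc]
      _ = P * T * ↑T⁻¹ * P := by
        rw [orthProj_mul_obliqueProj hmn, orthProj_mul_mul_obliqueProj hn m hT]
      _ = P := by rw [mul_assoc P, T.mul_inv, mul_one, hPP]
  · calc R * ↑T⁻¹ * P * (P * T * Q)
        = R * ↑T⁻¹ * (P * P) * T * Q := by simp only [mul_assoc]
      _ = R * (↑T⁻¹ * T) * Q := by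
        rw [hPP, obliqueProj_mul_mul_orthProj hmn hTinv, mul_assoc R]
      _ = Q := by rw [T.inv_mul, mul_one, obliqueProj_mul_orthProj hm]

theorem stmt_4_general (n m : EuclideanSpace ℝ (Fin 3)) (hn : ‖n‖ = 1) (hm : ‖m‖ = 1)
    (hnm : 1 / 2 < ⟪n, m⟫)
    (H : EuclideanSpace ℝ (Fin 3) →L[ℝ] EuclideanSpace ℝ (Fin 3))
    (hHn : H n = 0)
    (d : ℝ) (hd : |d| * ‖H‖ < 1 / 2) :
    ∃ Binv : EuclideanSpace ℝ (Fin 3) →L[ℝ] EuclideanSpace ℝ (Fin 3),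
      Binv = orthProj m ∘L Binv ∘L orthProj n ∧
      (orthProj n ∘L (ContinuousLinearMap.id ℝ _ - d • H) ∘L orthProj m) ∘L Binv =
        orthProj n ∧
      Binv ∘L (orthProj n ∘L (ContinuousLinearMap.id ℝ _ - d • H) ∘L orthProj m) =
        orthProj m := by
  have hdH : ‖d • H‖ < 1 := calc
    ‖d • H‖ ≤ |d| * ‖H‖ := norm_smul_le d H
    _ < 1 := by linarith
  have hmn : ⟪m, n⟫ ≠ 0 := by rw [real_inner_comm]; exact (one_half_pos.trans hnm).ne'
  have hT : (↑(Units.oneSub (d • H) hdH) : 𝔼 →L[ℝ] 𝔼) n = n := by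
    simp [hHn]
  simpa only [← mul_def, Units.val_oneSub, one_def, mul_assoc] using
    exists_inverse_orthProj_mul_mul_orthProj hn hm hmn _ hT

theorem stmt_4 (n m : EuclideanSpace ℝ (Fin 3)) (hn : ‖n‖ = 1) (hm : ‖m‖ = 1)
    (hnm : 1 / 2 < ⟪n, m⟫)
    (H : EuclideanSpace ℝ (Fin 3) →L[ℝ] EuclideanSpace ℝ (Fin 3))
    (hHsym : ∀ x y, ⟪H x, y⟫ = ⟪x, H y⟫) (hHn : H n = 0)
    (d : ℝ) (hd : |d| * ‖H‖ < 1 / 2) :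
    ∃ Binv : EuclideanSpace ℝ (Fin 3) →L[ℝ] EuclideanSpace ℝ (Fin 3),
      Binv = orthProj m ∘L Binv ∘L orthProj n ∧
      (orthProj n ∘L (ContinuousLinearMap.id ℝ _ - d • H) ∘L orthProj m) ∘L Binv =
        orthProj n ∧
      Binv ∘L (orthProj n ∘L (ContinuousLinearMap.id ℝ _ - d • H) ∘L orthProj m) =
        orthProj m :=
  stmt_4_general n m hn hm hnm H hHn d hd
end
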